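/- Let ε > 0 and α ∈ ℂ with εα ≠ 2 and εα ≠ -2. Define Cosh_α(n) := (E_α(n) + E_{-α}(n))/2 and Sinh_α(n) := (E_α(n) - E_{-α}(n))/2 for n ∈ ℤ. Then for all n ∈ ℤ: Cosh_α(n)² - Sinh_α(n)² = 1; (Cosh_α(n+1) - Cosh_α(n))/ε = α·(Sinh_α(n) + Sinh_α(n+1))/2; and (Sinh_α(n+1) - Sinh_α(n))/ε = α·(Cosh_α(n) + Cosh_α(n+1))/2. -/

import Mathlib

/-!
The Cayley exponential `E_α = q ^ n`, `q = (1 + εα/2) / (1 - εα/2)`, is the solution of the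
trapezoidal rule `E(n+1) - E(n) = (εα/2) (E(n) + E(n+1))`, and `E_{-α} = E_α⁻¹`. The two
difference relations are linear combinations of the trapezoidal rules for `α` and `-α`, and
`Cosh² - Sinh² = E_α E_{-α} = 1`.
-/

/-- The Cayley-exponential function on the time scale εℤ. -/
noncomputable def cayleyExp (ε : ℝ) (α : ℂ) (n : ℤ) : ℂ :=
  ((1 + (ε : ℂ) * α / 2) / (1 - (ε : ℂ) * α / 2)) ^ n

/-- The Cayley-hyperbolic cosine on εℤ. -/
noncomputable def cayleyCosh (ε : ℝ) (α : ℂ) (n : ℤ) : ℂ :=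
  (cayleyExp ε α n + cayleyExp ε (-α) n) / 2

/-- The Cayley-hyperbolic sine on εℤ. -/
noncomputable def cayleySinh (ε : ℝ) (α : ℂ) (n : ℤ) : ℂ :=
  (cayleyExp ε α n - cayleyExp ε (-α) n) / 2

theorem one_sub_div_two_ne_zero {z : ℂ} (h : z ≠ 2) : 1 - z / 2 ≠ 0 :=
  fun h0 ↦ h (by linear_combination -2 * h0)

theorem one_add_div_two_ne_zero {z : ℂ} (h : z ≠ -2) : 1 + z / 2 ≠ 0 :=
  fun h0 ↦ h (by linear_combination 2 * h0)

theorem cayleyExp_neg (ε : ℝ) (α : ℂ) (n : ℤ) : cayleyExp ε (-α) n = (cayleyExp ε α n)⁻¹ := by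
  rw [cayleyExp, cayleyExp, ← inv_zpow, inv_div]
  congr 2 <;> ring

section Cayley

variable {ε : ℝ} {α : ℂ}

theorem cayleyExp_succ_sub (hp : (ε : ℂ) * α ≠ 2) (hm : (ε : ℂ) * α ≠ -2) (n : ℤ) :
    cayleyExp ε α (n + 1) - cayleyExp ε α n
      = ε * α / 2 * (cayleyExp ε α n + cayleyExp ε α (n + 1)) := by
  have hsub := one_sub_div_two_ne_zero hp
  have hq : (1 + (ε : ℂ) * α / 2) / (1 - (ε : ℂ) * α / 2) * (1 - (ε : ℂ) * α / 2)
      = 1 + (ε : ℂ) * α / 2 := div_mul_cancel₀ _ hsub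
  unfold cayleyExp
  rw [zpow_add_one₀ (div_ne_zero (one_add_div_two_ne_zero hm) hsub)]
  linear_combination ((1 + (ε : ℂ) * α / 2) / (1 - (ε : ℂ) * α / 2)) ^ n * hq

theorem cayleyExp_neg_succ_sub (hp : (ε : ℂ) * α ≠ 2) (hm : (ε : ℂ) * α ≠ -2) (n : ℤ) :
    cayleyExp ε (-α) (n + 1) - cayleyExp ε (-α) n
      = ε * -α / 2 * (cayleyExp ε (-α) n + cayleyExp ε (-α) (n + 1)) :=
  cayleyExp_succ_sub (by rwa [mul_neg, ne_eq, neg_eq_iff_eq_neg])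
    (by rwa [mul_neg, ne_eq, neg_inj]) n

theorem cayleyExp_mul_cayleyExp_neg (hp : (ε : ℂ) * α ≠ 2) (hm : (ε : ℂ) * α ≠ -2) (n : ℤ) :
    cayleyExp ε α n * cayleyExp ε (-α) n = 1 := by
  rw [cayleyExp_neg]
  exact mul_inv_cancel₀ <| zpow_ne_zero _ <|
    div_ne_zero (one_add_div_two_ne_zero hm) (one_sub_div_two_ne_zero hp)

theorem cayleyCosh_sq_sub_cayleySinh_sq (hp : (ε : ℂ) * α ≠ 2) (hm : (ε : ℂ) * α ≠ -2)
    (n : ℤ) : cayleyCosh ε α n ^ 2 - cayleySinh ε α n ^ 2 = 1 := by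
  rw [cayleyCosh, cayleySinh]
  linear_combination cayleyExp_mul_cayleyExp_neg hp hm n

theorem cayleyCosh_succ_sub (hp : (ε : ℂ) * α ≠ 2) (hm : (ε : ℂ) * α ≠ -2) (n : ℤ) :
    cayleyCosh ε α (n + 1) - cayleyCosh ε α n
      = ε * α / 2 * (cayleySinh ε α n + cayleySinh ε α (n + 1)) := by
  rw [cayleyCosh, cayleyCosh, cayleySinh, cayleySinh]
  linear_combination (cayleyExp_succ_sub hp hm n + cayleyExp_neg_succ_sub hp hm n) / 2

theorem cayleySinh_succ_sub (hp : (ε : ℂ) * α ≠ 2) (hm : (ε : ℂ) * α ≠ -2) (n : ℤ) :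
    cayleySinh ε α (n + 1) - cayleySinh ε α n
      = ε * α / 2 * (cayleyCosh ε α n + cayleyCosh ε α (n + 1)) := by
  rw [cayleyCosh, cayleyCosh, cayleySinh, cayleySinh]
  linear_combination (cayleyExp_succ_sub hp hm n - cayleyExp_neg_succ_sub hp hm n) / 2

end Cayley

theorem stmt10 (ε : ℝ) (hε : 0 < ε) (α : ℂ)
    (h2 : (ε : ℂ) * α ≠ 2) (h2' : (ε : ℂ) * α ≠ -2) :
    ∀ n : ℤ,
      cayleyCosh ε α n ^ 2 - cayleySinh ε α n ^ 2 = 1 ∧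
      (cayleyCosh ε α (n + 1) - cayleyCosh ε α n) / (ε : ℂ)
        = α * (cayleySinh ε α n + cayleySinh ε α (n + 1)) / 2 ∧
      (cayleySinh ε α (n + 1) - cayleySinh ε α n) / (ε : ℂ)
        = α * (cayleyCosh ε α n + cayleyCosh ε α (n + 1)) / 2 := by
  intro n
  have hε0 : (ε : ℂ) ≠ 0 := by exact_mod_cast hε.ne'
  refine ⟨cayleyCosh_sq_sub_cayleySinh_sq h2 h2' n, ?_, ?_⟩
  · rw [cayleyCosh_succ_sub h2 h2' n]
    field_simp
  · rw [cayleySinh_succ_sub h2 h2' n]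
    field_simp
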